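/- arXiv:2205.13232 — 3 statements merged into one kernel-verified Lean document; each statement's English description precedes it below -/
import Mathlib

section
/- Suppose ψ(s) ≥ ψ_m > 0 for all s ≥ 0, κ > 0, and Σ_{i=1}^N v_i = 0. Then (2κ/N) Σ_{i=1}^N Σ_{j=1}^N ψ(|x_j−x_i|)(v_j−v_i)·v_i ≤ −2κψ_m Σ_{i=1}^N |v_i|². -/
open RealInnerProductSpace Finset

theorem alignment_dissipation_lower_bound
    (d N : ℕ) (hd : 1 ≤ d) (hN : 1 ≤ N)
    (x v : Fin N → EuclideanSpace ℝ (Fin d))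
    (ψ : ℝ → ℝ) (ψm κ : ℝ)
    (hψm : 0 < ψm)
    (hψ : ∀ s : ℝ, 0 ≤ s → ψm ≤ ψ s)
    (hκ : 0 < κ)
    (hv : ∑ i : Fin N, v i = 0) :
    (2 * κ / (N : ℝ)) * ∑ i : Fin N, ∑ j : Fin N,
        ψ ‖x j - x i‖ * ⟪v j - v i, v i⟫
      ≤ -(2 * κ * ψm) * ∑ i : Fin N, ‖v i‖ ^ 2 := by
  have hN0 : (0:ℝ) < (N:ℝ) := by exact_mod_cast hN
  set S : ℝ := ∑ i : Fin N, ∑ j : Fin N, ψ ‖x j - x i‖ * ⟪v j - v i, v i⟫ with hS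
  set T : ℝ := ∑ i : Fin N, ‖v i‖ ^ 2 with hT
  -- symmetrization
  have hswap : S = ∑ i : Fin N, ∑ j : Fin N, ψ ‖x j - x i‖ * ⟪v i - v j, v j⟫ := by
    rw [hS, Finset.sum_comm]
    refine Finset.sum_congr rfl fun i _ => Finset.sum_congr rfl fun j _ => ?_
    rw [norm_sub_rev]
  have h2S : 2 * S = ∑ i : Fin N, ∑ j : Fin N, ψ ‖x j - x i‖ * (-(‖v j - v i‖ ^ 2)) := by
    have : 2 * S = S + S := by ring
    rw [this]
    nth_rewrite 2 [hswap]
    rw [hS, ← Finset.sum_add_distrib]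
    refine Finset.sum_congr rfl fun i _ => ?_
    rw [← Finset.sum_add_distrib]
    refine Finset.sum_congr rfl fun j _ => ?_
    rw [← mul_add]
    congr 1
    rw [← real_inner_self_eq_norm_sq]
    simp only [inner_sub_left, inner_sub_right]
    rw [real_inner_comm (v j) (v i)]
    ring
  -- bound
  have hbound : 2 * S ≤ -(ψm) * ∑ i : Fin N, ∑ j : Fin N, ‖v j - v i‖ ^ 2 := by
    rw [h2S, Finset.mul_sum]
    refine Finset.sum_le_sum fun i _ => ?_
    rw [Finset.mul_sum]
    refine Finset.sum_le_sum fun j _ => ?_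
    have h1 : ψm ≤ ψ ‖x j - x i‖ := hψ _ (norm_nonneg _)
    nlinarith [sq_nonneg ‖v j - v i‖]
  -- compute the quadratic sum
  have hquad : ∑ i : Fin N, ∑ j : Fin N, ‖v j - v i‖ ^ 2 = 2 * (N:ℝ) * T := by
    have expand : ∀ i j : Fin N, ‖v j - v i‖ ^ 2
        = ‖v j‖ ^ 2 - 2 * ⟪v j, v i⟫ + ‖v i‖ ^ 2 := by
      intro i j
      rw [← real_inner_self_eq_norm_sq, ← real_inner_self_eq_norm_sq,
        ← real_inner_self_eq_norm_sq]
      simp only [inner_sub_left, inner_sub_right]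
      rw [real_inner_comm (v j) (v i)]
      ring
    have hcross : ∑ i : Fin N, ∑ j : Fin N, ⟪v j, v i⟫ = 0 := by
      calc ∑ i : Fin N, ∑ j : Fin N, ⟪v j, v i⟫
          = ∑ i : Fin N, ⟪∑ j : Fin N, v j, v i⟫ :=
            Finset.sum_congr rfl fun i _ => (sum_inner Finset.univ v (v i)).symm
        _ = 0 := by rw [hv]; simp
    have h1 : ∑ i : Fin N, ∑ j : Fin N, ‖v j‖ ^ 2 = (N:ℝ) * T := by
      rw [Finset.sum_comm]
      simp [hT, Finset.mul_sum]
    have h2 : ∑ i : Fin N, ∑ j : Fin N, ‖v i‖ ^ 2 = (N:ℝ) * T := by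
      simp [hT, Finset.mul_sum]
    have h3 : ∑ i : Fin N, ∑ j : Fin N, (2 * ⟪v j, v i⟫) = 0 := by
      simp only [← Finset.mul_sum, hcross, mul_zero]
    calc ∑ i : Fin N, ∑ j : Fin N, ‖v j - v i‖ ^ 2
        = ∑ i : Fin N, ∑ j : Fin N, (‖v j‖ ^ 2 - 2 * ⟪v j, v i⟫ + ‖v i‖ ^ 2) := by
          refine Finset.sum_congr rfl fun i _ => Finset.sum_congr rfl fun j _ => expand i j
      _ = (∑ i : Fin N, ∑ j : Fin N, ‖v j‖ ^ 2)
            - (∑ i : Fin N, ∑ j : Fin N, (2 * ⟪v j, v i⟫))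
            + (∑ i : Fin N, ∑ j : Fin N, ‖v i‖ ^ 2) := by
          simp only [Finset.sum_add_distrib, Finset.sum_sub_distrib]
      _ = 2 * (N:ℝ) * T := by rw [h1, h2, h3]; ring
  have hSle : S ≤ -(ψm * (N:ℝ)) * T := by nlinarith
  have hfrac : 0 < 2 * κ / (N:ℝ) := by positivity
  calc (2 * κ / (N:ℝ)) * S ≤ (2 * κ / (N:ℝ)) * (-(ψm * (N:ℝ)) * T) :=
        mul_le_mul_of_nonneg_left hSle hfrac.le
    _ = -(2 * κ * ψm) * T := by field_simp
end

section
/- Suppose 0 < ψ(s) ≤ ψ_M for all s ≥ 0, κ > 0, β > 0, and Σ_{i=1}^N v_i = 0. Then (κβ/N) Σ_{i=1}^N Σ_{j=1}^N ψ(|x_j−x_i|)(v_j−v_i)·x_i ≤ κ²ψ_M² β Σ_{i=1}^N |v_i|² + (β/2) Σ_{i=1}^N |x_i|². -/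
open RealInnerProductSpace Finset

theorem alignment_cross_term_upper_bound
    (d N : ℕ) (hd : 1 ≤ d) (hN : 1 ≤ N)
    (x v : Fin N → EuclideanSpace ℝ (Fin d))
    (ψ : ℝ → ℝ) (ψM κ β : ℝ)
    (hψ : ∀ s : ℝ, 0 ≤ s → 0 < ψ s ∧ ψ s ≤ ψM)
    (hκ : 0 < κ) (hβ : 0 < β)
    (hv : ∑ i : Fin N, v i = 0) :
    (κ * β / (N : ℝ)) * ∑ i : Fin N, ∑ j : Fin N,
        ψ ‖x j - x i‖ * ⟪v j - v i, x i⟫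
      ≤ κ ^ 2 * ψM ^ 2 * β * ∑ i : Fin N, ‖v i‖ ^ 2
        + (β / 2) * ∑ i : Fin N, ‖x i‖ ^ 2 := by
  have hN0 : (0:ℝ) < N := by exact_mod_cast hN
  have hψM : 0 < ψM := lt_of_lt_of_le (hψ 0 le_rfl).1 (hψ 0 le_rfl).2
  set F : Fin N → EuclideanSpace ℝ (Fin d) :=
    fun i => (κ / N) • ∑ j, ψ ‖x j - x i‖ • (v j - v i) with hF
  have hFi : ∀ i, ⟪F i, x i⟫ = (κ / N) * ∑ j, ψ ‖x j - x i‖ * ⟪v j - v i, x i⟫ := by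
    intro i
    rw [hF]
    rw [real_inner_smul_left, sum_inner]
    congr 1
    exact Finset.sum_congr rfl fun j _ => real_inner_smul_left _ _ _
  have h1 : (κ * β / (N:ℝ)) * ∑ i : Fin N, ∑ j : Fin N,
        ψ ‖x j - x i‖ * ⟪v j - v i, x i⟫ = β * ∑ i, ⟪F i, x i⟫ := by
    rw [Finset.mul_sum, Finset.mul_sum]
    refine Finset.sum_congr rfl fun i _ => ?_
    rw [hFi, Finset.mul_sum, Finset.mul_sum, Finset.mul_sum]
    refine Finset.sum_congr rfl fun j _ => ?_
    field_simp
  -- norm bound on F i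
  have hFnorm : ∀ i, ‖F i‖ ≤ (κ / N) * (ψM * ∑ j, ‖v j - v i‖) := by
    intro i
    rw [hF]
    have h2 : ‖∑ j, ψ ‖x j - x i‖ • (v j - v i)‖ ≤ ψM * ∑ j, ‖v j - v i‖ := by
      calc ‖∑ j, ψ ‖x j - x i‖ • (v j - v i)‖
          ≤ ∑ j, ‖ψ ‖x j - x i‖ • (v j - v i)‖ := norm_sum_le _ _
        _ ≤ ∑ j, ψM * ‖v j - v i‖ := by
            refine Finset.sum_le_sum fun j _ => ?_
            rw [norm_smul, Real.norm_eq_abs,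
              abs_of_pos (hψ _ (norm_nonneg _)).1]
            exact mul_le_mul_of_nonneg_right (hψ _ (norm_nonneg _)).2 (norm_nonneg _)
        _ = ψM * ∑ j, ‖v j - v i‖ := by rw [Finset.mul_sum]
    calc ‖(κ / (N:ℝ)) • ∑ j, ψ ‖x j - x i‖ • (v j - v i)‖
        = (κ / N) * ‖∑ j, ψ ‖x j - x i‖ • (v j - v i)‖ := by
          rw [norm_smul, Real.norm_eq_abs, abs_of_pos (by positivity)]
      _ ≤ (κ / N) * (ψM * ∑ j, ‖v j - v i‖) :=
          mul_le_mul_of_nonneg_left h2 (by positivity)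
  have hFsq : ∀ i, ‖F i‖ ^ 2 ≤ (κ / N) ^ 2 * ψM ^ 2 * (N * ∑ j, ‖v j - v i‖ ^ 2) := by
    intro i
    have h3 : (∑ j : Fin N, ‖v j - v i‖) ^ 2 ≤ (N:ℝ) * ∑ j, ‖v j - v i‖ ^ 2 := by
      have := sq_sum_le_card_mul_sum_sq (s := (univ : Finset (Fin N)))
        (f := fun j => ‖v j - v i‖)
      simpa using this
    have h4 : ‖F i‖ ^ 2 ≤ ((κ / N) * (ψM * ∑ j, ‖v j - v i‖)) ^ 2 := by
      have := hFnorm i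
      have hnn : (0:ℝ) ≤ ‖F i‖ := norm_nonneg _
      nlinarith
    calc ‖F i‖ ^ 2 ≤ ((κ / N) * (ψM * ∑ j, ‖v j - v i‖)) ^ 2 := h4
      _ = (κ / N) ^ 2 * ψM ^ 2 * (∑ j, ‖v j - v i‖) ^ 2 := by ring
      _ ≤ (κ / N) ^ 2 * ψM ^ 2 * ((N:ℝ) * ∑ j, ‖v j - v i‖ ^ 2) :=
          mul_le_mul_of_nonneg_left h3 (by positivity)
  have hS : ∑ i : Fin N, ∑ j : Fin N, ‖v j - v i‖ ^ 2
      = 2 * (N:ℝ) * ∑ i, ‖v i‖ ^ 2 := by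
    have expand : ∀ i j : Fin N, ‖v j - v i‖ ^ 2
        = ‖v j‖ ^ 2 - 2 * ⟪v j, v i⟫ + ‖v i‖ ^ 2 := fun i j => norm_sub_sq_real _ _
    have hzero : ∀ i, ∑ j : Fin N, ⟪v j, v i⟫ = 0 := by
      intro i
      rw [← sum_inner, hv, inner_zero_left]
    calc ∑ i : Fin N, ∑ j : Fin N, ‖v j - v i‖ ^ 2
        = ∑ i : Fin N, ((∑ j, ‖v j‖ ^ 2) - 2 * (∑ j, ⟪v j, v i⟫) + (N:ℝ) * ‖v i‖ ^ 2) := by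
          refine Finset.sum_congr rfl fun i _ => ?_
          simp only [expand]
          rw [Finset.sum_add_distrib, Finset.sum_sub_distrib, Finset.sum_const,
            Finset.mul_sum, card_univ, Fintype.card_fin, nsmul_eq_mul]
      _ = 2 * (N:ℝ) * ∑ i, ‖v i‖ ^ 2 := by
          simp only [hzero, mul_zero, sub_zero]
          rw [Finset.sum_add_distrib, Finset.sum_const, card_univ, Fintype.card_fin,
            nsmul_eq_mul, ← Finset.mul_sum]
          ring
  -- main chain
  rw [h1]
  have step2 : β * ∑ i, ⟪F i, x i⟫
      ≤ (β / 2) * ∑ i, ‖F i‖ ^ 2 + (β / 2) * ∑ i, ‖x i‖ ^ 2 := by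
    have hterm : ∀ i : Fin N, ⟪F i, x i⟫ ≤ (‖F i‖ ^ 2 + ‖x i‖ ^ 2) / 2 := by
      intro i
      have h := real_inner_le_norm (F i) (x i)
      nlinarith [sq_nonneg (‖F i‖ - ‖x i‖)]
    calc β * ∑ i, ⟪F i, x i⟫
        ≤ β * ∑ i, (‖F i‖ ^ 2 + ‖x i‖ ^ 2) / 2 :=
          mul_le_mul_of_nonneg_left (Finset.sum_le_sum fun i _ => hterm i) hβ.le
      _ = (β / 2) * ∑ i, ‖F i‖ ^ 2 + (β / 2) * ∑ i, ‖x i‖ ^ 2 := by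
          rw [Finset.mul_sum, Finset.mul_sum, Finset.mul_sum, ← Finset.sum_add_distrib]
          exact Finset.sum_congr rfl fun i _ => by ring
  refine step2.trans (add_le_add_left ?_ _)
  have hF2 : ∑ i, ‖F i‖ ^ 2 ≤ 2 * κ ^ 2 * ψM ^ 2 * ∑ i, ‖v i‖ ^ 2 := by
    calc ∑ i, ‖F i‖ ^ 2
        ≤ ∑ i, (κ / N) ^ 2 * ψM ^ 2 * ((N:ℝ) * ∑ j, ‖v j - v i‖ ^ 2) :=
          Finset.sum_le_sum fun i _ => hFsq i
      _ = (κ / N) ^ 2 * ψM ^ 2 * (N:ℝ) * ∑ i, ∑ j, ‖v j - v i‖ ^ 2 := by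
          rw [Finset.mul_sum]
          exact Finset.sum_congr rfl fun i _ => by ring
      _ = (κ / N) ^ 2 * ψM ^ 2 * (N:ℝ) * (2 * (N:ℝ) * ∑ i, ‖v i‖ ^ 2) := by rw [hS]
      _ = 2 * κ ^ 2 * ψM ^ 2 * ∑ i, ‖v i‖ ^ 2 := by
          field_simp
  calc (β / 2) * ∑ i, ‖F i‖ ^ 2
      ≤ (β / 2) * (2 * κ ^ 2 * ψM ^ 2 * ∑ i, ‖v i‖ ^ 2) :=
        mul_le_mul_of_nonneg_left hF2 (by positivity)
    _ = κ ^ 2 * ψM ^ 2 * β * ∑ i, ‖v i‖ ^ 2 := by ring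
end

section
/- Suppose 0 < ψ_m ≤ ψ(s) ≤ ψ_M for all s ≥ 0, κψ_m > σ with σ > 0, 0 < β < min{1, (2κψ_m − 2σ)/(1 + κ²ψ_M²)}, and Σ_{i=1}^N x_i = 0, Σ_{i=1}^N v_i = 0. Set a = min{2κψ_m − 2σ − (1 + κ²ψ_M²)β, β/2} (so a > 0). Then the Lyapunov drift satisfies (2κ/N) Σ_{i,j=1}^N ψ(|x_j−x_i|)(v_j−v_i)·v_i + (κβ/N) Σ_{i,j=1}^N ψ(|x_j−x_i|)(v_j−v_i)·x_i + (β + 2σ) Σ_{i=1}^N |v_i|² − β Σ_{i=1}^N |x_i|² ≤ −a (Σ_{i=1}^N |x_i|² + Σ_{i=1}^N |v_i|²). -/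
open RealInnerProductSpace Finset

lemma sym_sum {d N : ℕ} (c : Fin N → Fin N → ℝ) (hc : ∀ i j, c i j = c j i)
    (u w : Fin N → EuclideanSpace ℝ (Fin d)) :
    2 * (∑ i : Fin N, ∑ j : Fin N, c i j * ⟪u j - u i, w i⟫)
      = - ∑ i : Fin N, ∑ j : Fin N, c i j * ⟪u j - u i, w j - w i⟫ := by
  have h : ∑ i : Fin N, ∑ j : Fin N, c i j * ⟪u j - u i, w i⟫
      = ∑ i : Fin N, ∑ j : Fin N, c i j * ⟪u i - u j, w j⟫ := by
    rw [Finset.sum_comm]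
    refine Finset.sum_congr rfl fun i _ => Finset.sum_congr rfl fun j _ => ?_
    rw [hc]
  rw [two_mul]
  nth_rewrite 2 [h]
  rw [← Finset.sum_add_distrib, ← Finset.sum_neg_distrib]
  refine Finset.sum_congr rfl fun i _ => ?_
  rw [← Finset.sum_add_distrib, ← Finset.sum_neg_distrib]
  refine Finset.sum_congr rfl fun j _ => ?_
  simp only [inner_sub_left, inner_sub_right]
  ring

lemma sum_sq_sub {d N : ℕ} (u : Fin N → EuclideanSpace ℝ (Fin d))
    (hu : ∑ i : Fin N, u i = 0) :
    ∑ i : Fin N, ∑ j : Fin N, ‖u j - u i‖ ^ 2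
      = 2 * N * ∑ i : Fin N, ‖u i‖ ^ 2 := by
  have key : ∀ i j : Fin N, ‖u j - u i‖ ^ 2
      = ‖u j‖ ^ 2 - 2 * ⟪u j, u i⟫ + ‖u i‖ ^ 2 := fun i j => by
    rw [norm_sub_sq_real]
  simp_rw [key, Finset.sum_add_distrib, Finset.sum_sub_distrib]
  have h0 : ∑ i : Fin N, ∑ j : Fin N, 2 * ⟪u j, u i⟫ = 0 := by
    simp_rw [← Finset.mul_sum, ← sum_inner, hu]
    simp
  rw [h0]
  simp [Finset.sum_const, Finset.card_univ]
  rw [← Finset.mul_sum]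
  ring

set_option maxHeartbeats 1000000 in
theorem lyapunov_drift_negative_definite
    (d N : ℕ) (hd : 1 ≤ d) (hN : 1 ≤ N)
    (x v : Fin N → EuclideanSpace ℝ (Fin d))
    (ψ : ℝ → ℝ) (ψm ψM κ σ β a : ℝ)
    (hψm : 0 < ψm)
    (hψ : ∀ s : ℝ, 0 ≤ s → ψm ≤ ψ s ∧ ψ s ≤ ψM)
    (hκ : 0 < κ) (hσ : 0 < σ)
    (hflock : σ < κ * ψm)
    (hβpos : 0 < β)
    (hβ : β < min 1 ((2 * κ * ψm - 2 * σ) / (1 + κ ^ 2 * ψM ^ 2)))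
    (ha : a = min (2 * κ * ψm - 2 * σ - (1 + κ ^ 2 * ψM ^ 2) * β) (β / 2))
    (hx : ∑ i : Fin N, x i = 0)
    (hv : ∑ i : Fin N, v i = 0) :
    (2 * κ / (N : ℝ)) * (∑ i : Fin N, ∑ j : Fin N,
        ψ ‖x j - x i‖ * ⟪v j - v i, v i⟫)
      + (κ * β / (N : ℝ)) * (∑ i : Fin N, ∑ j : Fin N,
        ψ ‖x j - x i‖ * ⟪v j - v i, x i⟫)
      + (β + 2 * σ) * ∑ i : Fin N, ‖v i‖ ^ 2
      - β * ∑ i : Fin N, ‖x i‖ ^ 2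
    ≤ -a * (∑ i : Fin N, ‖x i‖ ^ 2 + ∑ i : Fin N, ‖v i‖ ^ 2) := by
  have hPsym : ∀ i j : Fin N, ψ ‖x j - x i‖ = ψ ‖x i - x j‖ := fun i j => by
    rw [norm_sub_rev]
  have hPm : ∀ i j : Fin N, ψm ≤ ψ ‖x j - x i‖ := fun i j => (hψ _ (norm_nonneg _)).1
  have hPM : ∀ i j : Fin N, ψ ‖x j - x i‖ ≤ ψM := fun i j => (hψ _ (norm_nonneg _)).2
  have hψM : 0 < ψM :=
    lt_of_lt_of_le hψm (le_trans (hψ 0 le_rfl).1 (hψ 0 le_rfl).2)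
  have hNpos : (0:ℝ) < N := by exact_mod_cast hN
  set X := ∑ i : Fin N, ‖x i‖ ^ 2 with hXdef
  set V := ∑ i : Fin N, ‖v i‖ ^ 2 with hVdef
  have hX0 : 0 ≤ X := Finset.sum_nonneg fun i _ => sq_nonneg _
  have hV0 : 0 ≤ V := Finset.sum_nonneg fun i _ => sq_nonneg _
  set A := ∑ i : Fin N, ∑ j : Fin N, ψ ‖x j - x i‖ * ⟪v j - v i, v i⟫ with hAdef
  set B := ∑ i : Fin N, ∑ j : Fin N, ψ ‖x j - x i‖ * ⟪v j - v i, x i⟫ with hBdef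
  have hsumv : ∑ i : Fin N, ∑ j : Fin N, ‖v j - v i‖ ^ 2 = 2 * N * V := sum_sq_sub v hv
  have hsumx : ∑ i : Fin N, ∑ j : Fin N, ‖x j - x i‖ ^ 2 = 2 * N * X := sum_sq_sub x hx
  -- A bound
  have hA2 : 2 * A = - ∑ i : Fin N, ∑ j : Fin N, ψ ‖x j - x i‖ * ⟪v j - v i, v j - v i⟫ :=
    sym_sum (fun i j => ψ ‖x j - x i‖) hPsym v v
  have hAle : 2 * A ≤ - (ψm * (2 * N * V)) := by
    rw [hA2, neg_le_neg_iff, ← hsumv, Finset.mul_sum]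
    refine Finset.sum_le_sum fun i _ => ?_
    rw [Finset.mul_sum]
    refine Finset.sum_le_sum fun j _ => ?_
    rw [real_inner_self_eq_norm_sq]
    exact mul_le_mul_of_nonneg_right (hPm i j) (sq_nonneg _)
  -- B bound
  have hB2 : 2 * B = - ∑ i : Fin N, ∑ j : Fin N, ψ ‖x j - x i‖ * ⟪v j - v i, x j - x i⟫ :=
    sym_sum (fun i j => ψ ‖x j - x i‖) hPsym v x
  have hBpt : ∀ i j : Fin N, -(κ * (ψ ‖x j - x i‖ * ⟪v j - v i, x j - x i⟫))
      ≤ (1/2) * ‖x j - x i‖ ^ 2 + (κ ^ 2 * ψM ^ 2 / 2) * ‖v j - v i‖ ^ 2 := by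
    intro i j
    have h1 : -⟪v j - v i, x j - x i⟫ ≤ ‖v j - v i‖ * ‖x j - x i‖ := by
      have ha1 := abs_real_inner_le_norm (v j - v i) (x j - x i)
      have ha2 := neg_abs_le ⟪v j - v i, x j - x i⟫
      linarith
    have hκP : 0 ≤ κ * ψ ‖x j - x i‖ :=
      le_of_lt (mul_pos hκ (lt_of_lt_of_le hψm (hPm i j)))
    have h2 : -(κ * (ψ ‖x j - x i‖ * ⟪v j - v i, x j - x i⟫))
        ≤ κ * ψ ‖x j - x i‖ * (‖v j - v i‖ * ‖x j - x i‖) := by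
      have := mul_le_mul_of_nonneg_left h1 hκP
      nlinarith [this]
    have h3 : κ * ψ ‖x j - x i‖ * (‖v j - v i‖ * ‖x j - x i‖)
        ≤ κ * ψM * (‖v j - v i‖ * ‖x j - x i‖) := by
      refine mul_le_mul_of_nonneg_right ?_ (mul_nonneg (norm_nonneg _) (norm_nonneg _))
      exact mul_le_mul_of_nonneg_left (hPM i j) (le_of_lt hκ)
    nlinarith [sq_nonneg (‖x j - x i‖ - κ * ψM * ‖v j - v i‖), h2, h3]
  have hBle : κ * (2 * B) ≤ N * X + κ ^ 2 * ψM ^ 2 * N * V := by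
    have heq : κ * (2 * B)
        = ∑ i : Fin N, ∑ j : Fin N,
            -(κ * (ψ ‖x j - x i‖ * ⟪v j - v i, x j - x i⟫)) := by
      rw [hB2, mul_neg, Finset.mul_sum, ← Finset.sum_neg_distrib]
      refine Finset.sum_congr rfl fun i _ => ?_
      rw [Finset.mul_sum, ← Finset.sum_neg_distrib]
    rw [heq]
    calc ∑ i : Fin N, ∑ j : Fin N,
            -(κ * (ψ ‖x j - x i‖ * ⟪v j - v i, x j - x i⟫))
        ≤ ∑ i : Fin N, ∑ j : Fin N,
            ((1/2) * ‖x j - x i‖ ^ 2 + (κ ^ 2 * ψM ^ 2 / 2) * ‖v j - v i‖ ^ 2) :=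
          Finset.sum_le_sum fun i _ => Finset.sum_le_sum fun j _ => hBpt i j
      _ = (1/2) * (∑ i : Fin N, ∑ j : Fin N, ‖x j - x i‖ ^ 2)
            + (κ ^ 2 * ψM ^ 2 / 2) * (∑ i : Fin N, ∑ j : Fin N, ‖v j - v i‖ ^ 2) := by
          simp_rw [Finset.sum_add_distrib, Finset.mul_sum]
      _ = N * X + κ ^ 2 * ψM ^ 2 * N * V := by
          rw [hsumx, hsumv]; ring
  -- assemble
  have hAfin : (2 * κ / (N:ℝ)) * A ≤ -(2 * κ * ψm) * V := by
    have hc : (0:ℝ) < κ / N := div_pos hκ hNpos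
    have h := mul_le_mul_of_nonneg_left hAle hc.le
    have hNe : (N:ℝ) ≠ 0 := ne_of_gt hNpos
    have e1 : κ / ↑N * (2 * A) = 2 * κ / ↑N * A := by ring
    have e2 : κ / ↑N * -(ψm * (2 * ↑N * V)) = -(2 * κ * ψm) * V := by
      field_simp
    rw [e1, e2] at h
    exact h
  have hBfin : (κ * β / (N:ℝ)) * B ≤ (β / 2) * X + (β * κ ^ 2 * ψM ^ 2 / 2) * V := by
    have hc : (0:ℝ) < β / (2 * N) := div_pos hβpos (by positivity)
    have h := mul_le_mul_of_nonneg_left hBle hc.le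
    have hNe : (N:ℝ) ≠ 0 := ne_of_gt hNpos
    have e1 : β / (2 * ↑N) * (κ * (2 * B)) = κ * β / ↑N * B := by
      field_simp
    have e2 : β / (2 * ↑N) * (↑N * X + κ ^ 2 * ψM ^ 2 * ↑N * V)
        = (β / 2) * X + (β * κ ^ 2 * ψM ^ 2 / 2) * V := by
      field_simp
    rw [e1, e2] at h
    exact h
  have ha1 : a ≤ 2 * κ * ψm - 2 * σ - (1 + κ ^ 2 * ψM ^ 2) * β := ha ▸ min_le_left _ _
  have ha2 : a ≤ β / 2 := ha ▸ min_le_right _ _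
  have hcv : β + 2 * σ - 2 * κ * ψm + β * κ ^ 2 * ψM ^ 2 / 2 ≤ -a := by
    nlinarith [mul_nonneg hβpos.le (sq_nonneg (κ * ψM))]
  have hV1 := mul_le_mul_of_nonneg_right hcv hV0
  have hX1 := mul_le_mul_of_nonneg_right (show -(β/2) ≤ -a by linarith) hX0
  nlinarith [hAfin, hBfin, hV1, hX1]
end
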